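/- For v ∈ (0, 1/2), there is no infinite sequence of connected open arcs U₀, U₁, U₂, … on the circle with U₀ nonempty such that each Uₙ₊₁ is the image of Uₙ under some Kasner arc map Kα with Uₙ ⊆ Aα \ 𝐀 (where 𝐀 is the union of pairwise overlaps). Equivalently: for any nonempty connected open U and any admissible choice of symbols ω, there exists N ≥ 0 such that K_ω^N(U) intersects the overlap set 𝐀. -/

import Mathlib

/-!
Away from the overlaps, a point of `Aα` lies within `π/3` of the centre of `Aα`: otherwise one
of the two neighbouring arcs, centred `2π/3` away, would also contain it. In the coordinate
`tan (φ/2)`, centred at the arc, `Kα` is (up to a reflection) multiplication by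
`c = (1+v)/(1-v)`, so on that `π/3`-neighbourhood its derivative is at least `4c/(3+c²)`, which
exceeds `1` for `1 < c < 3`, i.e. for `0 < v < 1/2`. Hence two distinct points of `U₀` have
images in the connected sets `Uₙ` whose distance grows geometrically, whereas every `Uₙ`, an
interval within `π/3` of the centre of an arc, is shorter than `2π`.
-/

open Real

/-- The arc `Aα` on the circle (in angular coordinates): `A₁ = {φ : cos φ ≥ v}` and its
rotations by `±2π/3`. -/
def kasnerArc (v : ℝ) : Fin 3 → Set ℝ
  | 0 => {φ : ℝ | Real.cos φ ≥ v}
  | 1 => {φ : ℝ | Real.cos (φ - 2*π/3) ≥ v}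
  | 2 => {φ : ℝ | Real.cos (φ + 2*π/3) ≥ v}

/-- The multi-valued overlap set `𝐀 = ⋃_{α ≠ β} Aα ∩ Aβ`. -/
def overlapSet (v : ℝ) : Set ℝ :=
  ⋃ (α : Fin 3) (β : Fin 3) (_ : α ≠ β), kasnerArc v α ∩ kasnerArc v β

/-- The Kasner arc map `Kα` in angular coordinates: `K₁(φ) = π - 2 arctan(((1+v)/(1-v)) tan(φ/2))`
and its conjugates under rotation by `±2π/3`. -/
noncomputable def kasnerArcMap (v : ℝ) : Fin 3 → ℝ → ℝ
  | 0 => fun φ => π - 2 * Real.arctan ((1 + v) / (1 - v) * Real.tan (φ / 2))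
  | 1 => fun φ => (π - 2 * Real.arctan ((1 + v) / (1 - v) * Real.tan ((φ - 2*π/3) / 2))) + 2*π/3
  | 2 => fun φ => (π - 2 * Real.arctan ((1 + v) / (1 - v) * Real.tan ((φ + 2*π/3) / 2))) - 2*π/3

open Set

lemma half_le_cos_sub_or_half_le_cos_add_of_cos_lt {ψ : ℝ} (h : cos ψ < 1 / 2) :
    1 / 2 ≤ cos (ψ - 2 * π / 3) ∨ 1 / 2 ≤ cos (ψ + 2 * π / 3) := by
  have hcos : cos (2 * π / 3) = -(1 / 2) := by
    rw [show 2 * π / 3 = π - π / 3 by ring, cos_pi_sub, cos_pi_div_three]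
  have hsin : sin (2 * π / 3) = √3 / 2 := by
    rw [show 2 * π / 3 = π - π / 3 by ring, sin_pi_sub, sin_pi_div_three]
  rw [cos_sub, cos_add, hcos, hsin]
  have h3 : √3 ^ 2 = 3 := sq_sqrt (by norm_num)
  have hpyth := sin_sq_add_cos_sq ψ
  have hcos_ge := neg_one_le_cos ψ
  -- the goal reads `1 + cos ψ ≤ ±√3 sin ψ`; squared: `(1 + cos ψ) (1 - 2 cos ψ) ≥ 0`
  have hsq : (1 + cos ψ) ^ 2 ≤ (√3 * |sin ψ|) ^ 2 := by
    rw [mul_pow, sq_abs, h3]; nlinarith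
  have habs : 1 + cos ψ ≤ √3 * |sin ψ| :=
    (pow_le_pow_iff_left₀ (by linarith) (by positivity) two_ne_zero).1 hsq
  rcases le_total 0 (sin ψ) with hs | hs
  · rw [abs_of_nonneg hs] at habs
    left; linarith
  · rw [abs_of_nonpos hs] at habs
    right; linarith

lemma sin_half_sq_le_of_half_le_cos {z : ℝ} (hz : 1 / 2 ≤ cos z) :
    sin (z / 2) ^ 2 ≤ 1 / 4 := by
  have h := cos_sq (z / 2)
  rw [mul_div_cancel₀ z two_ne_zero] at h
  linarith [sin_sq_add_cos_sq (z / 2)]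

lemma cos_half_ne_zero_of_half_le_cos {z : ℝ} (hz : 1 / 2 ≤ cos z) : cos (z / 2) ≠ 0 := by
  intro h
  linarith [sin_half_sq_le_of_half_le_cos hz, h ▸ sin_sq_add_cos_sq (z / 2)]

lemma dist_lt_two_pi_of_neg_one_lt_cos {x y : ℝ} (h : ∀ z ∈ uIcc x y, -1 < cos z) :
    dist x y < 2 * π := by
  by_contra! hle
  obtain ⟨k, hk, -⟩ := existsUnique_add_zsmul_mem_Ico two_pi_pos π (min x y)
  have hmem : π + k • (2 * π) ∈ uIcc x y := by
    rw [← Icc_min_max]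
    exact ⟨hk.1, by linarith [hk.2, max_sub_min_eq_abs' x y, Real.dist_eq x y]⟩
  have hcos := h _ hmem
  rw [zsmul_eq_mul, cos_add_int_mul_two_pi, cos_pi] at hcos
  exact lt_irrefl _ hcos

/-- Multiplication by `c` in the coordinate `t = tan (φ/2)`. -/
noncomputable def scaledHalfAngle (c φ : ℝ) : ℝ := 2 * arctan (c * tan (φ / 2))

lemma hasDerivAt_scaledHalfAngle (c : ℝ) {z : ℝ} (hz : cos (z / 2) ≠ 0) :
    HasDerivAt (scaledHalfAngle c) (c / (cos (z / 2) ^ 2 + c ^ 2 * sin (z / 2) ^ 2)) z := by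
  have htan : HasDerivAt (fun φ => tan (φ / 2)) (1 / cos (z / 2) ^ 2 * (1 / 2)) z :=
    (hasDerivAt_tan hz).comp (h := fun φ => φ / 2) z ((hasDerivAt_id' z).div_const 2)
  refine (((hasDerivAt_arctan _).comp z (htan.const_mul c)).const_mul 2).congr_deriv ?_
  have hden : cos (z / 2) ^ 2 + c ^ 2 * sin (z / 2) ^ 2 ≠ 0 := by positivity
  rw [tan_eq_sin_div_cos]
  field_simp

lemma four_mul_div_three_add_sq_le {c z : ℝ} (hc : 1 ≤ c) (hz : 1 / 2 ≤ cos z) :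
    4 * c / (3 + c ^ 2) ≤ c / (cos (z / 2) ^ 2 + c ^ 2 * sin (z / 2) ^ 2) := by
  have hs := sin_half_sq_le_of_half_le_cos hz
  have hpyth := sin_sq_add_cos_sq (z / 2)
  -- the denominator is `1 + (c² - 1) sin² (z/2) ≤ (3 + c²) / 4`
  have hden : 0 < cos (z / 2) ^ 2 + c ^ 2 * sin (z / 2) ^ 2 := by nlinarith
  rw [div_le_div_iff₀ (by positivity) hden]
  nlinarith [mul_nonneg (by nlinarith : (0 : ℝ) ≤ c * (c ^ 2 - 1))
    (by linarith : (0 : ℝ) ≤ 1 / 4 - sin (z / 2) ^ 2)]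

lemma mul_dist_le_dist_scaledHalfAngle {c x y : ℝ} (hc : 1 ≤ c)
    (h : ∀ z ∈ uIcc x y, 1 / 2 ≤ cos z) :
    4 * c / (3 + c ^ 2) * dist x y ≤ dist (scaledHalfAngle c x) (scaledHalfAngle c y) := by
  wlog hxy : x ≤ y generalizing x y
  · rw [dist_comm, dist_comm (scaledHalfAngle c x)]
    exact this (uIcc_comm x y ▸ h) (le_of_not_ge hxy)
  rw [uIcc_of_le hxy] at h
  have hderiv : ∀ z ∈ Icc x y, HasDerivAt (scaledHalfAngle c)
      (c / (cos (z / 2) ^ 2 + c ^ 2 * sin (z / 2) ^ 2)) z :=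
    fun z hz => hasDerivAt_scaledHalfAngle c (cos_half_ne_zero_of_half_le_cos (h z hz))
  have hgrowth := (convex_Icc x y).mul_sub_le_image_sub_of_le_deriv
    (fun z hz => (hderiv z hz).continuousAt.continuousWithinAt)
    (fun z hz => (hderiv z (interior_subset hz)).differentiableAt.differentiableWithinAt)
    (fun z hz => (hderiv z (interior_subset hz)).deriv ▸
      four_mul_div_three_add_sq_le hc (h z (interior_subset hz)))
    x (left_mem_Icc.2 hxy) y (right_mem_Icc.2 hxy) hxy
  rw [Real.dist_eq, Real.dist_eq, abs_sub_comm, abs_of_nonneg (sub_nonneg.2 hxy),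
    abs_sub_comm]
  exact hgrowth.trans (le_abs_self _)

lemma one_lt_four_mul_div_three_add_sq {c : ℝ} (h₁ : 1 < c) (h₃ : c < 3) :
    1 < 4 * c / (3 + c ^ 2) := by
  rw [lt_div_iff₀ (by positivity)]
  nlinarith

lemma exists_pow_mul_dist_le_of_expanding {X : Type*} [PseudoMetricSpace X] {U : ℕ → Set X}
    {f : ℕ → X → X} {r : ℝ} (hr : 0 ≤ r) (hU : ∀ n, U (n + 1) = f n '' U n)
    (hf : ∀ n, ∀ x ∈ U n, ∀ y ∈ U n, r * dist x y ≤ dist (f n x) (f n y))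
    {x y : X} (hx : x ∈ U 0) (hy : y ∈ U 0) (n : ℕ) :
    ∃ x' ∈ U n, ∃ y' ∈ U n, r ^ n * dist x y ≤ dist x' y' := by
  induction n with
  | zero => exact ⟨x, hx, y, hy, by simp⟩
  | succ n ih =>
    obtain ⟨x', hx', y', hy', hxy⟩ := ih
    refine ⟨f n x', hU n ▸ mem_image_of_mem _ hx', f n y', hU n ▸ mem_image_of_mem _ hy',
      ?_⟩
    calc r ^ (n + 1) * dist x y = r * (r ^ n * dist x y) := by ring
      _ ≤ r * dist x' y' := mul_le_mul_of_nonneg_left hxy hr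
      _ ≤ dist (f n x') (f n y') := hf n x' hx' y' hy'

/-- `Aα = {φ | v ≤ cos (φ + arcShift α)}`, so `-arcShift α` is the centre of `Aα`. -/
noncomputable def arcShift : Fin 3 → ℝ
  | 0 => 0
  | 1 => -(2 * π / 3)
  | 2 => 2 * π / 3

noncomputable def kasnerRatio (v : ℝ) : ℝ := (1 + v) / (1 - v)

lemma mem_kasnerArc_iff {v φ : ℝ} {a : Fin 3} :
    φ ∈ kasnerArc v a ↔ v ≤ cos (φ + arcShift a) := by
  fin_cases a <;> simp [kasnerArc, arcShift, sub_eq_add_neg]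

lemma kasnerArcMap_eq (v : ℝ) (a : Fin 3) (φ : ℝ) :
    kasnerArcMap v a φ =
      π - scaledHalfAngle (kasnerRatio v) (φ + arcShift a) - arcShift a := by
  match a with
  | 0 => simp [kasnerArcMap, scaledHalfAngle, arcShift, kasnerRatio]
  | 1 =>
    simp only [kasnerArcMap, scaledHalfAngle, arcShift, kasnerRatio, sub_neg_eq_add,
      ← sub_eq_add_neg]
  | 2 => simp only [kasnerArcMap, scaledHalfAngle, arcShift, kasnerRatio]

lemma one_le_kasnerRatio {v : ℝ} (h₀ : 0 ≤ v) (h₁ : v < 1) : 1 ≤ kasnerRatio v := by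
  rw [kasnerRatio, le_div_iff₀ (by linarith)]; linarith

lemma one_lt_kasnerRatio {v : ℝ} (h₀ : 0 < v) (h₁ : v < 1) : 1 < kasnerRatio v := by
  rw [kasnerRatio, lt_div_iff₀ (by linarith)]; linarith

lemma kasnerRatio_lt_three {v : ℝ} (h : v < 1 / 2) : kasnerRatio v < 3 := by
  rw [kasnerRatio, div_lt_iff₀ (by linarith)]; linarith

lemma exists_ne_cos_arcShift_eq (a : Fin 3) (φ : ℝ) :
    (∃ b ≠ a, cos (φ + arcShift b) = cos (φ + arcShift a - 2 * π / 3)) ∧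
      ∃ b ≠ a, cos (φ + arcShift b) = cos (φ + arcShift a + 2 * π / 3) := by
  match a with
  | 0 =>
    exact ⟨⟨1, by decide, by simp [arcShift, sub_eq_add_neg]⟩,
      ⟨2, by decide, by simp [arcShift]⟩⟩
  | 1 =>
    refine ⟨⟨2, by decide, ?_⟩, ⟨0, by decide, by simp [arcShift]⟩⟩
    rw [← cos_add_two_pi (φ + arcShift 1 - 2 * π / 3)]; congr 1; simp [arcShift]; ring
  | 2 =>
    refine ⟨⟨0, by decide, by simp [arcShift]⟩, ⟨1, by decide, ?_⟩⟩
    rw [← cos_sub_two_pi (φ + arcShift 2 + 2 * π / 3)]; congr 1; simp [arcShift]; ring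

lemma half_le_cos_of_mem_kasnerArc_diff_overlapSet {v φ : ℝ} {a : Fin 3} (hv : v ≤ 1 / 2)
    (hφ : φ ∈ kasnerArc v a \ overlapSet v) : 1 / 2 ≤ cos (φ + arcShift a) := by
  obtain ⟨ha, hnot⟩ := hφ
  by_contra! hlt
  have mem_overlap : ∀ b ≠ a, 1 / 2 ≤ cos (φ + arcShift b) → φ ∈ overlapSet v := by
    intro b hb hcos
    simp only [overlapSet, mem_iUnion]
    exact ⟨a, b, hb.symm, ha, mem_kasnerArc_iff.2 (hv.trans hcos)⟩
  obtain ⟨⟨b₁, hb₁, hcos₁⟩, b₂, hb₂, hcos₂⟩ := exists_ne_cos_arcShift_eq a φ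
  rcases half_le_cos_sub_or_half_le_cos_add_of_cos_lt hlt with h | h
  · exact hnot (mem_overlap b₁ hb₁ (hcos₁ ▸ h))
  · exact hnot (mem_overlap b₂ hb₂ (hcos₂ ▸ h))

section

variable {v : ℝ} {a : Fin 3} {U : Set ℝ} {x y : ℝ}

lemma half_le_cos_of_mem_uIcc_add_arcShift (hv : v ≤ 1 / 2) (hU : IsPreconnected U)
    (hUa : U ⊆ kasnerArc v a \ overlapSet v) (hx : x ∈ U) (hy : y ∈ U) :
    ∀ z ∈ uIcc (x + arcShift a) (y + arcShift a), 1 / 2 ≤ cos z := by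
  rw [← image_add_const_uIcc]
  rintro _ ⟨w, hw, rfl⟩
  exact half_le_cos_of_mem_kasnerArc_diff_overlapSet hv
    (hUa (hU.ordConnected.uIcc_subset hx hy hw))

lemma dist_lt_two_pi_of_subset_kasnerArc_diff (hv : v ≤ 1 / 2) (hU : IsPreconnected U)
    (hUa : U ⊆ kasnerArc v a \ overlapSet v) (hx : x ∈ U) (hy : y ∈ U) :
    dist x y < 2 * π := by
  rw [← dist_add_right x y (arcShift a)]
  exact dist_lt_two_pi_of_neg_one_lt_cos fun z hz => (by norm_num : (-1 : ℝ) < 1 / 2).trans_le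
    (half_le_cos_of_mem_uIcc_add_arcShift hv hU hUa hx hy z hz)

lemma mul_dist_le_dist_kasnerArcMap (hv₀ : 0 ≤ v) (hv : v ≤ 1 / 2) (hU : IsPreconnected U)
    (hUa : U ⊆ kasnerArc v a \ overlapSet v) (hx : x ∈ U) (hy : y ∈ U) :
    4 * kasnerRatio v / (3 + kasnerRatio v ^ 2) * dist x y ≤
      dist (kasnerArcMap v a x) (kasnerArcMap v a y) := by
  have hK : dist (kasnerArcMap v a x) (kasnerArcMap v a y) =
      dist (scaledHalfAngle (kasnerRatio v) (x + arcShift a))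
        (scaledHalfAngle (kasnerRatio v) (y + arcShift a)) := by
    simp only [kasnerArcMap_eq, Real.dist_eq]
    rw [← abs_neg]; ring_nf
  rw [hK, ← dist_add_right x y (arcShift a)]
  exact mul_dist_le_dist_scaledHalfAngle (one_le_kasnerRatio hv₀ (by linarith))
    (half_le_cos_of_mem_uIcc_add_arcShift hv hU hUa hx hy)

end

theorem no_orbit_avoiding_overlaps (v : ℝ) (hv : v ∈ Set.Ioo (0:ℝ) (1/2)) :
    ¬ ∃ (α : ℕ → Fin 3) (U : ℕ → Set ℝ),
        (U 0).Nonempty ∧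
        (∀ n, IsOpen (U n)) ∧
        (∀ n, IsPreconnected (U n)) ∧
        (∀ n, U n ⊆ kasnerArc v (α n) \ overlapSet v) ∧
        (∀ n, U (n + 1) = kasnerArcMap v (α n) '' U n) := by
  obtain ⟨hv₀, hv₁⟩ := hv
  rintro ⟨α, U, ⟨u, hu⟩, hopen, hconn, hsub, himg⟩
  set r := 4 * kasnerRatio v / (3 + kasnerRatio v ^ 2)
  have hr : 1 < r := one_lt_four_mul_div_three_add_sq
    (one_lt_kasnerRatio hv₀ (by linarith)) (kasnerRatio_lt_three hv₁)
  obtain ⟨x, hx, y, hy, hxy⟩ := (infinite_of_mem_nhds u ((hopen 0).mem_nhds hu)).nontrivial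
  obtain ⟨n, hn⟩ := pow_unbounded_of_one_lt (2 * π / dist x y) hr
  obtain ⟨x', hx', y', hy', hgrowth⟩ := exists_pow_mul_dist_le_of_expanding (r := r)
    (zero_le_one.trans hr.le) himg
    (fun n _ hx _ hy => mul_dist_le_dist_kasnerArcMap hv₀.le hv₁.le (hconn n) (hsub n) hx hy)
    hx hy n
  have hshort := dist_lt_two_pi_of_subset_kasnerArc_diff hv₁.le (hconn n) (hsub n) hx' hy'
  rw [div_lt_iff₀ (dist_pos.2 hxy)] at hn
  linarith
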